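/- arXiv:1702.08247 — 6 statements merged into one kernel-verified Lean document; each statement's English description precedes it below -/
import Mathlib

section
/- Let u_1,...,u_m and v_1,...,v_m be vectors in ℝ^n, and let p_1,...,p_m ∈ [0,1]. Then the expectation over independent Bernoulli variables π_1,...,π_m with π_i ~ Bern(p_i) of det(Σ_{i=1}^m π_i u_i v_iᵀ) equals det(Σ_{i=1}^m p_i u_i v_iᵀ). Concretely: Σ_{S ⊆ {1,...,m}} (Π_{i∈S} p_i)(Π_{i∉S} (1−p_i)) · det(Σ_{i∈S} u_i v_iᵀ) = det(Σ_{i=1}^m p_i u_i v_iᵀ). -/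
/-!
Rank-one perturbations change a determinant affinely,
`det (A + a • u vᵀ) = (1 - a) det A + a det (A + u vᵀ)`: expanding by multilinearity in the rows,
every term containing two rows of `a • u vᵀ` has two proportional rows and vanishes. So
`det (∑ πᵢ uᵢ vᵢᵀ)` is affine in each `πᵢ` separately, and the expectation of a function that is
affine in each of several independent variables is its value at their means: average out one
Bernoulli variable at a time.
-/

open Finset Matrix

namespace Matrix

variable {n R : Type*} [Fintype n] [DecidableEq n] [CommRing R]

theorem det_updateRow_add_vecMulVec_of_eq_zero (A : Matrix n n R) {w : n → R} (v : n → R) {k : n}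
    (hk : w k = 0) : ((A + vecMulVec w v).updateRow k v).det = (A.updateRow k v).det := by
  -- row `i` of `vecMulVec w v` is `w i` times the new row `k`
  refine det_eq_of_forall_row_eq_smul_add_const w k hk fun i j => ?_
  rcases eq_or_ne i k with rfl | hik
  · simp [hk]
  · simp [updateRow_ne hik, vecMulVec_apply]

theorem det_add_vecMulVec (A : Matrix n n R) (w v : n → R) :
    (A + vecMulVec w v).det = A.det + ∑ i, w i * (A.updateRow i v).det := by
  suffices h : ∀ s : Finset n, ∀ w : n → R, (∀ i ∉ s, w i = 0) →
      (A + vecMulVec w v).det = A.det + ∑ i ∈ s, w i * (A.updateRow i v).det from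
    h univ w fun i hi => absurd (mem_univ i) hi
  intro s
  induction s using Finset.induction_on with
  | empty =>
    intro w hw
    rw [show w = 0 from funext fun i => hw i (notMem_empty i)]
    simp
  | @insert k s hk ih =>
    intro w hw
    set w' := Function.update w k 0
    have hw' : ∀ i ∉ s, w' i = 0 := fun i hi => by
      rcases eq_or_ne i k with rfl | hik
      · simp [w']
      · simp [w', hik, hw i (by simp [hik, hi])]
    have hsplit : A + vecMulVec w v = (A + vecMulVec w' v).updateRow k (A k + w k • v) := by
      ext i j
      rcases eq_or_ne i k with rfl | hik
      · simp [vecMulVec_apply]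
      · simp [vecMulVec_apply, w', hik]
    have hrow_k : (A + vecMulVec w' v).updateRow k (A k) = A + vecMulVec w' v := by
      ext i j
      rcases eq_or_ne i k with rfl | hik
      · simp [vecMulVec_apply, w']
      · simp [updateRow_ne hik]
    have hsum : ∑ i ∈ s, w' i * (A.updateRow i v).det = ∑ i ∈ s, w i * (A.updateRow i v).det :=
      sum_congr rfl fun i hi => by
        simp only [w', Function.update_of_ne (ne_of_mem_of_not_mem hi hk)]
    rw [hsplit, det_updateRow_add, det_updateRow_smul, hrow_k,
      det_updateRow_add_vecMulVec_of_eq_zero A v (Function.update_self k 0 w), ih w' hw', hsum,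
      sum_insert hk]
    ring

theorem det_add_smul_vecMulVec (A : Matrix n n R) (u v : n → R) (a : R) :
    (A + a • vecMulVec u v).det = (1 - a) * A.det + a * (A + vecMulVec u v).det := by
  rw [← smul_vecMulVec, det_add_vecMulVec, det_add_vecMulVec, mul_add, sum_congr rfl
    fun i _ => show (a • u) i * _ = a * (u i * _) from mul_assoc _ _ _, ← mul_sum]
  ring

end Matrix

theorem sum_powerset_bernoulli_mul_eq_of_affine {ι R M : Type*} [DecidableEq ι] [CommRing R]
    [AddCommGroup M] [Module R M] (f : M → R) (x : ι → M)
    (hf : ∀ A i (a : R), f (A + a • x i) = (1 - a) * f A + a * f (A + x i))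
    (p : ι → R) (s : Finset ι) (A : M) :
    ∑ S ∈ s.powerset, (∏ i ∈ S, p i) * (∏ i ∈ s \ S, (1 - p i)) * f (A + ∑ i ∈ S, x i)
      = f (A + ∑ i ∈ s, p i • x i) := by
  induction s using Finset.induction_on generalizing A with
  | empty => simp
  | @insert k s hk ih =>
    calc _ = (1 - p k) * ∑ S ∈ s.powerset, (∏ i ∈ S, p i) * (∏ i ∈ s \ S, (1 - p i)) *
              f (A + ∑ i ∈ S, x i)
          + p k * ∑ S ∈ s.powerset, (∏ i ∈ S, p i) * (∏ i ∈ s \ S, (1 - p i)) *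
              f (A + x k + ∑ i ∈ S, x i) := ?_
      _ = f (A + ∑ i ∈ s, p i • x i + p k • x k) := by rw [ih, ih, hf, add_right_comm]
      _ = f (A + ∑ i ∈ insert k s, p i • x i) := by rw [sum_insert hk, add_left_comm, add_comm]
    rw [mul_sum, mul_sum, sum_powerset_insert hk]
    congr 1 <;> refine sum_congr rfl fun S hS => ?_
    · have hkS : k ∉ S := fun h => hk (mem_powerset.mp hS h)
      rw [insert_sdiff_of_notMem s hkS, prod_insert (fun h => hk (mem_sdiff.mp h).1)]
      ring
    · have hkS : k ∉ S := fun h => hk (mem_powerset.mp hS h)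
      rw [insert_sdiff_insert, sdiff_insert_of_notMem hk, prod_insert hkS, sum_insert hkS,
        ← add_assoc]
      ring

theorem expected_det_rank_one_sum_general
    (m n : ℕ) (u v : Fin m → Fin n → ℝ) (p : Fin m → ℝ) :
    ∑ S ∈ Finset.univ.powerset,
        (∏ i ∈ S, p i) * (∏ i ∈ Sᶜ, (1 - p i)) *
          (∑ i ∈ S, Matrix.vecMulVec (u i) (v i)).det
      = (∑ i : Fin m, p i • Matrix.vecMulVec (u i) (v i)).det := by
  simpa [compl_eq_univ_sdiff] using sum_powerset_bernoulli_mul_eq_of_affine det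
    (fun i => vecMulVec (u i) (v i)) (fun A i a => det_add_smul_vecMulVec A (u i) (v i) a) p
    univ 0

/-- The expectation over independent Bernoulli variables `π i ~ Bern (p i)` of
`det (∑ i, π i • u i (v i)ᵀ)` equals `det (∑ i, p i • u i (v i)ᵀ)`. -/
theorem expected_det_rank_one_sum
    (m n : ℕ) (u v : Fin m → Fin n → ℝ) (p : Fin m → ℝ)
    (hp : ∀ i, p i ∈ Set.Icc (0 : ℝ) 1) :
    ∑ S ∈ Finset.univ.powerset,
        (∏ i ∈ S, p i) * (∏ i ∈ Sᶜ, (1 - p i)) *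
          (∑ i ∈ S, Matrix.vecMulVec (u i) (v i)).det
      = (∑ i : Fin m, p i • Matrix.vecMulVec (u i) (v i)).det :=
  expected_det_rank_one_sum_general m n u v p
end

section
/- Let U and V be n×m real matrices with columns u_1,...,u_m and v_1,...,v_m respectively, and let p_1,...,p_m ∈ [0,1]. Let P = diag(p_1,...,p_m). Then the expectation over independent Bernoulli variables π_1,...,π_m with π_i ~ Bern(p_i) of det(U Π Vᵀ), where Π = diag(π_1,...,π_m), equals det(U P Vᵀ). Concretely: Σ_{S ⊆ {1,...,m}} (Π_{i∈S} p_i)(Π_{i∉S} (1−p_i)) · det(U D_S Vᵀ) = det(U P Vᵀ), where D_S is the diagonal 0/1 matrix with ones exactly at the indices in S. -/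
/-!
Expanding the determinant multilinearly in its rows writes `det (U * diagonal d * Vᵀ)` as a sum
over maps `r : Fin n → Fin m` of `(∏ j, U j (r j)) * det (rows r of Vᵀ) * ∏ j, d (r j)`, and only
injective `r` contribute, so it is a combination of square-free monomials `∏ i ∈ T, d i`.
Under independent Bernoulli variables `E [∏ i ∈ T, π i] = ∏ i ∈ T, p i`, hence by linearity the
expectation is the same polynomial evaluated at `p`.
-/

open Matrix Finset

section Determinant

variable {R ι n : Type*} [CommRing R] [Fintype n] [DecidableEq n]

theorem det_submatrix_eq_zero_of_not_injective {A : Matrix ι n R} {r : n → ι}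
    (hr : ¬ Function.Injective r) : (A.submatrix r id).det = 0 := by
  obtain ⟨a, b, hab, hne⟩ := Function.not_injective_iff.mp hr
  exact det_zero_of_row_eq hne (funext fun k => by simp [hab])

variable [Fintype ι] [DecidableEq ι]

theorem det_mul_diagonal_mul_transpose (U V : Matrix n ι R) (d : ι → R) :
    (U * diagonal d * Vᵀ).det
      = ∑ r : n → ι, (∏ j, U j (r j) * d (r j)) * (Vᵀ.submatrix r id).det := by
  have rows : U * diagonal d * Vᵀ = of fun j => ∑ i, (U j i * d i) • Vᵀ i := by
    ext j k
    simp [mul_apply, diagonal_apply, mul_assoc]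
  rw [rows]
  refine (detRowAlternating.toMultilinearMap.map_sum fun j i => (U j i * d i) • Vᵀ i).trans ?_
  exact sum_congr rfl fun r _ =>
    detRowAlternating.map_smul_univ (fun j => U j (r j) * d (r j)) (Vᵀ.submatrix r id)

theorem det_mul_diagonal_mul_transpose_eq_sum_prod_image (U V : Matrix n ι R) (d : ι → R) :
    (U * diagonal d * Vᵀ).det
      = ∑ r : n → ι, (∏ j, U j (r j)) * (Vᵀ.submatrix r id).det * ∏ i ∈ univ.image r, d i := by
  rw [det_mul_diagonal_mul_transpose]
  refine sum_congr rfl fun r _ => ?_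
  by_cases hr : Function.Injective r
  · rw [prod_image hr.injOn, prod_mul_distrib]
    ring
  · simp [det_submatrix_eq_zero_of_not_injective hr]

end Determinant

section Bernoulli

variable {R ι : Type*} [CommRing R] [Fintype ι] [DecidableEq ι]

/-- `S` stands for the set of indices with `π i = 1`. -/
def bernoulliExpectation (p : ι → R) (f : Finset ι → R) : R :=
  ∑ S ∈ univ.powerset, (∏ i ∈ S, p i) * (∏ i ∈ Sᶜ, (1 - p i)) * f S

theorem bernoulliExpectation_sum_mul {κ : Type*} (p : ι → R) (s : Finset κ) (c : κ → R)
    (f : κ → Finset ι → R) :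
    bernoulliExpectation p (fun S => ∑ k ∈ s, c k * f k S)
      = ∑ k ∈ s, c k * bernoulliExpectation p (f k) := by
  simp only [bernoulliExpectation, mul_sum]
  rw [sum_comm]
  exact sum_congr rfl fun _ _ => sum_congr rfl fun _ _ => by ring

theorem bernoulliExpectation_prod_indicator (p : ι → R) (T : Finset ι) :
    bernoulliExpectation p (fun S => ∏ i ∈ T, if i ∈ S then 1 else 0) = ∏ i ∈ T, p i := by
  have weight (S : Finset ι) : (∏ i ∈ Sᶜ, (1 - p i)) * ∏ i ∈ T, (if i ∈ S then 1 else 0)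
      = ∏ i ∈ univ \ S, (if i ∈ T then 0 else 1 - p i) := by
    have split (i : ι) :
        (if i ∈ T then 0 else 1 - p i) = (1 - p i) * if i ∉ T then 1 else 0 := by
      split_ifs <;> simp
    simp only [prod_congr rfl fun i _ => split i, prod_mul_distrib, prod_boole,
      compl_eq_univ_sdiff, mem_sdiff, mem_univ, true_and]
    congr 2
    grind
  calc bernoulliExpectation p (fun S => ∏ i ∈ T, if i ∈ S then 1 else 0)
      = ∑ S ∈ univ.powerset,
          (∏ i ∈ S, p i) * ∏ i ∈ univ \ S, (if i ∈ T then 0 else 1 - p i) := by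
        simp only [bernoulliExpectation, mul_assoc, weight]
    _ = ∏ i, (p i + if i ∈ T then 0 else 1 - p i) := (prod_add _ _ _).symm
    _ = ∏ i, (if i ∈ T then p i else 1) := prod_congr rfl fun i _ => by split_ifs <;> ring
    _ = ∏ i ∈ T, p i := by rw [prod_ite_mem, univ_inter]

end Bernoulli

theorem expected_det_UPiV_general
    (m n : ℕ) (U V : Matrix (Fin n) (Fin m) ℝ) (p : Fin m → ℝ) :
    ∑ S ∈ Finset.univ.powerset,
        (∏ i ∈ S, p i) * (∏ i ∈ Sᶜ, (1 - p i)) *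
          (U * Matrix.diagonal (fun i => if i ∈ S then (1 : ℝ) else 0) * Vᵀ).det
      = (U * Matrix.diagonal p * Vᵀ).det := by
  change bernoulliExpectation p (fun S => _) = _
  simp only [det_mul_diagonal_mul_transpose_eq_sum_prod_image U V, bernoulliExpectation_sum_mul,
    bernoulliExpectation_prod_indicator]

/-- The expectation over independent Bernoulli variables `π i ~ Bern (p i)` of
`det (U Π Vᵀ)`, with `Π = diag (π 1, …, π m)`, equals `det (U P Vᵀ)` where
`P = diag (p 1, …, p m)`. -/
theorem expected_det_UPiV
    (m n : ℕ) (U V : Matrix (Fin n) (Fin m) ℝ) (p : Fin m → ℝ)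
    (hp : ∀ i, p i ∈ Set.Icc (0 : ℝ) 1) :
    ∑ S ∈ Finset.univ.powerset,
        (∏ i ∈ S, p i) * (∏ i ∈ Sᶜ, (1 - p i)) *
          (U * Matrix.diagonal (fun i => if i ∈ S then (1 : ℝ) else 0) * Vᵀ).det
      = (U * Matrix.diagonal p * Vᵀ).det :=
  expected_det_UPiV_general m n U V p
end

section
/- Let R be a commutative ring, let u_1,...,u_m, v_1,...,v_m ∈ R^n, and let c_1,...,c_m ∈ R. Then det(Σ_{i=1}^m c_i u_i v_iᵀ) = Σ_{Q} (Π_{k∈Q} c_k) · det(Σ_{k∈Q} u_k v_kᵀ), where the sum ranges over all subsets Q of {1,...,m} with |Q| = n. -/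
/-!
Row `j` of `∑ i, c i • u i (v i)ᵀ` is `∑ i, (c i * u i j) • v i`, so expanding the determinant
multilinearly in the rows gives a sum over all maps `r : Fin n → Fin m`. Since the determinant
is alternating, only injective `r` survive. Grouping these by their image `Q`, an `n`-subset,
pulls out `∏ k ∈ Q, c k` and leaves the same expansion of `det (∑ k ∈ Q, u k (v k)ᵀ)`.
-/

open Finset Function Matrix

theorem AlternatingMap.map_sum_smul_eq_sum_injective {R M N ι α : Type*} [CommSemiring R]
    [AddCommMonoid M] [Module R M] [AddCommMonoid N] [Module R N]
    [Fintype α] [DecidableEq α] [DecidableEq ι]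
    (f : M [⋀^α]→ₗ[R] N) (a : α → ι → R) (x : ι → M) (s : Finset ι) :
    f (fun j => ∑ i ∈ s, a j i • x i)
      = ∑ r ∈ Fintype.piFinset (fun _ => s) with Injective r, (∏ j, a j (r j)) • f (x ∘ r) := by
  rw [← f.coe_multilinearMap, MultilinearMap.map_sum_finset, sum_filter]
  refine sum_congr rfl fun r _ => (f.map_smul_univ _ (x ∘ r)).trans ?_
  split_ifs with hr
  · rfl
  · rw [f.map_eq_zero_of_not_injective _ fun h => hr h.of_comp, smul_zero]

theorem Matrix.det_sum_vecMulVec {R ι n : Type*} [CommRing R] [Fintype n] [DecidableEq n]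
    [DecidableEq ι] (s : Finset ι) (u v : ι → n → R) :
    (∑ i ∈ s, vecMulVec (u i) (v i)).det
      = ∑ r ∈ Fintype.piFinset (fun _ => s) with Injective r,
          (∏ j, u (r j) j) * (of fun j => v (r j)).det := by
  have hrows : ∑ i ∈ s, vecMulVec (u i) (v i) = of fun j => ∑ i ∈ s, u i j • v i := by
    ext j k
    simp [sum_apply, vecMulVec_apply]
  rw [hrows]
  exact detRowAlternating.map_sum_smul_eq_sum_injective (fun j i => u i j) v s

theorem Finset.image_univ_eq_iff_forall_mem {α ι : Type*} [Fintype α] [DecidableEq ι]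
    {r : α → ι} (hr : Injective r) {Q : Finset ι} (hQ : #Q = Fintype.card α) :
    univ.image r = Q ↔ ∀ j, r j ∈ Q := by
  refine ⟨fun h j => h ▸ mem_image_of_mem r (mem_univ j), fun h => ?_⟩
  refine eq_of_subset_of_card_le (by simpa [subset_iff] using h) ?_
  rw [hQ, card_image_of_injective _ hr, card_univ]

theorem Finset.sum_filter_injective_eq_sum_powersetCard {α ι M : Type*} [Fintype α]
    [DecidableEq α] [Fintype ι] [DecidableEq ι] [AddCommMonoid M] (f : Finset ι → (α → ι) → M) :
    ∑ r with Injective r, f (univ.image r) r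
      = ∑ Q ∈ univ.powersetCard (Fintype.card α),
          ∑ r ∈ Fintype.piFinset (fun _ => Q) with Injective r, f Q r := by
  rw [← sum_fiberwise_of_maps_to (t := univ.powersetCard (Fintype.card α))
    (g := fun r : α → ι => univ.image r) fun r hr => by
      rw [mem_filter] at hr
      simp [mem_powersetCard, card_image_of_injective _ hr.2]]
  refine sum_congr rfl fun Q hQ => ?_
  rw [mem_powersetCard_univ] at hQ
  have hfiber : ({r | Injective r ∧ image r univ = Q} : Finset (α → ι))
      = {r ∈ Fintype.piFinset (fun _ : α => Q) | Injective r} := by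
    ext r
    simp only [mem_filter, mem_univ, true_and, Fintype.mem_piFinset]
    exact ⟨fun ⟨hr, h⟩ => ⟨(image_univ_eq_iff_forall_mem hr hQ).1 h, hr⟩,
      fun ⟨h, hr⟩ => ⟨hr, (image_univ_eq_iff_forall_mem hr hQ).2 h⟩⟩
  rw [filter_filter]
  refine sum_congr hfiber fun r hr => ?_
  rw [mem_filter, Fintype.mem_piFinset] at hr
  rw [(image_univ_eq_iff_forall_mem hr.2 hQ).2 hr.1]

/-- Cauchy–Binet expansion: over a commutative ring,
`det (∑ i, c i • u i (v i)ᵀ) = ∑_{Q, |Q| = n} (∏ k ∈ Q, c k) * det (∑ k ∈ Q, u k (v k)ᵀ)`. -/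
theorem det_weighted_rank_one_sum_expansion
    (R : Type*) [CommRing R]
    (m n : ℕ) (u v : Fin m → Fin n → R) (c : Fin m → R) :
    (∑ i : Fin m, c i • Matrix.vecMulVec (u i) (v i)).det
      = ∑ Q ∈ Finset.univ.powersetCard n,
          (∏ k ∈ Q, c k) * (∑ k ∈ Q, Matrix.vecMulVec (u k) (v k)).det := by
  set D : (Fin n → Fin m) → R := fun r => (∏ j, u (r j) j) * (of fun j => v (r j)).det
  have hweights : ∀ r : Fin n → Fin m, Injective r →
      ∏ j, (c (r j) • u (r j)) j = (∏ k ∈ univ.image r, c k) * ∏ j, u (r j) j := fun r hr => by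
    rw [prod_image hr.injOn, ← prod_mul_distrib]
    rfl
  simp_rw [← smul_vecMulVec]
  calc (∑ i, vecMulVec (c i • u i) (v i)).det
      = ∑ r with Injective r, (∏ k ∈ univ.image r, c k) * D r := by
        rw [det_sum_vecMulVec, Fintype.piFinset_univ]
        exact sum_congr rfl fun r hr => by rw [hweights r (mem_filter.1 hr).2, mul_assoc]
    _ = ∑ Q ∈ univ.powersetCard n,
          (∏ k ∈ Q, c k) * ∑ r ∈ Fintype.piFinset (fun _ => Q) with Injective r, D r := by
        simp_rw [sum_filter_injective_eq_sum_powersetCard (fun Q r => (∏ k ∈ Q, c k) * D r),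
          Fintype.card_fin, mul_sum]
    _ = _ := by simp_rw [det_sum_vecMulVec, D]
end

section
/- Let U_1,...,U_m be real matrices with U_i of size n×r_i, and let p_1,...,p_m ∈ [0,1]. Then the expectation over independent Bernoulli variables π_1,...,π_m with π_i ~ Bern(p_i) of det(Σ_{i=1}^m π_i U_i U_iᵀ) is at least det(Σ_{i=1}^m p_i U_i U_iᵀ). Concretely: Σ_{S ⊆ {1,...,m}} (Π_{i∈S} p_i)(Π_{i∉S} (1−p_i)) · det(Σ_{i∈S} U_i U_iᵀ) ≥ det(Σ_{i=1}^m p_i U_i U_iᵀ). -/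
/-!
For positive semidefinite `A` and `B`, the map `t ↦ det (A + t B)` is convex on `[0, 1]`:
writing `B = Cᴴ C`, for positive definite `A` it equals `det A · ∏ (1 + t μᵢ)` with `μᵢ ≥ 0` the
eigenvalues of `C A⁻¹ Cᴴ`, and the singular case follows by perturbing `A` to `A + ε`.
Hence replacing one deterministic summand `pₐ Aₐ` by the random summand `πₐ Aₐ` can only raise
the determinant on average; doing this for every index, by induction, gives the theorem.
-/

open Matrix Finset

section

variable {n : Type*} [Fintype n] [DecidableEq n]

theorem Matrix.IsHermitian.det_one_add_smul_eq_prod {M : Matrix n n ℝ} (hM : M.IsHermitian)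
    (c : ℝ) : (1 + c • M).det = ∏ i, (1 + c * hM.eigenvalues i) := by
  have hM' : IsSelfAdjoint M := hM
  have hcfc : 1 + c • M = cfc (fun x => 1 + c * x) M := by
    rw [cfc_const_add 1 (c * ·) M, cfc_const_mul_id c M, Algebra.algebraMap_eq_smul_one, one_smul]
  rw [hcfc, hM.cfc_eq, IsHermitian.cfc]
  simp [-Unitary.conjStarAlgAut_apply]

theorem Finset.prod_one_add_mul_le {ι : Type*} (s : Finset ι) {x : ι → ℝ}
    (hx : ∀ i ∈ s, 0 ≤ x i) {p : ℝ} (hp₀ : 0 ≤ p) (hp₁ : p ≤ 1) :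
    ∏ i ∈ s, (1 + p * x i) ≤ 1 - p + p * ∏ i ∈ s, (1 + x i) := by
  induction s using Finset.cons_induction with
  | empty => simp
  | cons a s ha ih =>
    rw [forall_mem_cons] at hx
    have hP : 1 ≤ ∏ i ∈ s, (1 + x i) := one_le_prod fun i hi => by linarith [hx.2 i hi]
    rw [prod_cons, prod_cons]
    -- the gap after using `ih` is `p (1 - p) x a (∏ (1 + x i) - 1) ≥ 0`
    nlinarith [mul_le_mul_of_nonneg_left (ih hx.2) (by nlinarith : 0 ≤ 1 + p * x a),
      mul_nonneg (mul_nonneg (mul_nonneg hp₀ (sub_nonneg.2 hp₁)) hx.1) (sub_nonneg.2 hP)]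

theorem Matrix.PosSemidef.det_one_add_smul_le {M : Matrix n n ℝ} (hM : M.PosSemidef)
    {p : ℝ} (hp₀ : 0 ≤ p) (hp₁ : p ≤ 1) : (1 + p • M).det ≤ 1 - p + p * (1 + M).det := by
  have h := univ.prod_one_add_mul_le (fun i _ => hM.eigenvalues_nonneg i) hp₀ hp₁
  have h₁ := hM.1.det_one_add_smul_eq_prod 1
  simp only [one_smul, one_mul] at h₁
  rwa [hM.1.det_one_add_smul_eq_prod, h₁]

theorem Matrix.PosDef.det_add_smul_le {A B : Matrix n n ℝ} (hA : A.PosDef) (hB : B.PosSemidef)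
    {p : ℝ} (hp₀ : 0 ≤ p) (hp₁ : p ≤ 1) :
    (A + p • B).det ≤ (1 - p) * A.det + p * (A + B).det := by
  obtain ⟨C, rfl⟩ : ∃ C : Matrix n n ℝ, B = Cᴴ * C := by
    open scoped MatrixOrder in exact CStarAlgebra.nonneg_iff_eq_star_mul_self.mp hB.nonneg
  have hdet (c : ℝ) : (A + c • (Cᴴ * C)).det = A.det * (1 + c • (C * A⁻¹ * Cᴴ)).det := by
    have : A + c • (Cᴴ * C) = A * (1 + c • (A⁻¹ * Cᴴ) * C) := by
      rw [Matrix.mul_add, Matrix.mul_one, smul_mul_assoc, mul_smul_comm, ← Matrix.mul_assoc,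
        ← Matrix.mul_assoc, mul_nonsing_inv _ hA.det_pos.ne'.isUnit, Matrix.one_mul]
    rw [this, det_mul, det_one_add_mul_comm, mul_smul_comm, Matrix.mul_assoc]
  have hM : (C * A⁻¹ * Cᴴ).PosSemidef := hA.inv.posSemidef.mul_mul_conjTranspose_same C
  have h := mul_le_mul_of_nonneg_left (hM.det_one_add_smul_le hp₀ hp₁) hA.det_pos.le
  rw [hdet, ← one_smul ℝ (Cᴴ * C), hdet, one_smul]
  linarith

theorem Matrix.PosSemidef.det_add_smul_le {A B : Matrix n n ℝ} (hA : A.PosSemidef)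
    (hB : B.PosSemidef) {p : ℝ} (hp₀ : 0 ≤ p) (hp₁ : p ≤ 1) :
    (A + p • B).det ≤ (1 - p) * A.det + p * (A + B).det := by
  -- perturb `A` to the positive definite `A + ε • 1` and let `ε → 0⁺`
  let gap : ℝ → ℝ := fun ε =>
    (1 - p) * (A + ε • 1).det + p * (A + ε • 1 + B).det - (A + ε • 1 + p • B).det
  have hgap : Continuous gap := by fun_prop
  have hpos : ∀ ε ∈ Set.Ioi (0 : ℝ), 0 ≤ gap ε := fun ε hε =>
    sub_nonneg.2 <| (PosDef.posSemidef_add hA (PosDef.one.smul hε)).det_add_smul_le hB hp₀ hp₁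
  have := ge_of_tendsto (hgap.tendsto 0 |>.mono_left nhdsWithin_le_nhds)
    (eventually_nhdsWithin_of_forall hpos)
  simpa [gap] using this

/-- The probability that a random subset of `s`, containing each `i` independently with
probability `p i`, equals `S`. -/
def bernoulliSetProb {ι : Type*} [DecidableEq ι] (p : ι → ℝ) (s S : Finset ι) : ℝ :=
  (∏ i ∈ S, p i) * ∏ i ∈ s \ S, (1 - p i)

section bernoulliSetProb

variable {ι : Type*} [DecidableEq ι] {p : ι → ℝ} {s S : Finset ι} {a : ι}

lemma bernoulliSetProb_nonneg (hp : ∀ i ∈ s, p i ∈ Set.Icc (0 : ℝ) 1) (hS : S ⊆ s) :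
    0 ≤ bernoulliSetProb p s S :=
  mul_nonneg (prod_nonneg fun i hi => (hp i (hS hi)).1)
    (prod_nonneg fun i hi => sub_nonneg.2 (hp i (mem_sdiff.1 hi).1).2)

lemma bernoulliSetProb_insert (ha : a ∉ s) (hS : S ⊆ s) :
    bernoulliSetProb p (insert a s) S = (1 - p a) * bernoulliSetProb p s S := by
  have haS : a ∉ S := fun h => ha (hS h)
  rw [bernoulliSetProb, bernoulliSetProb, insert_sdiff_of_notMem _ haS,
    prod_insert fun h => ha (mem_sdiff.1 h).1]
  ring

lemma bernoulliSetProb_insert_insert (ha : a ∉ s) (hS : S ⊆ s) :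
    bernoulliSetProb p (insert a s) (insert a S) = p a * bernoulliSetProb p s S := by
  rw [bernoulliSetProb, bernoulliSetProb, insert_sdiff_insert, sdiff_insert_of_notMem ha,
    prod_insert fun h => ha (hS h), mul_assoc]

end bernoulliSetProb

theorem det_add_sum_smul_le_sum_bernoulliSetProb {ι : Type*} [DecidableEq ι] (s : Finset ι)
    {A : ι → Matrix n n ℝ} (hA : ∀ i ∈ s, (A i).PosSemidef) {p : ι → ℝ}
    (hp : ∀ i ∈ s, p i ∈ Set.Icc (0 : ℝ) 1) {C : Matrix n n ℝ} (hC : C.PosSemidef) :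
    (C + ∑ i ∈ s, p i • A i).det ≤
      ∑ S ∈ s.powerset, bernoulliSetProb p s S * (C + ∑ i ∈ S, A i).det := by
  induction s using Finset.induction generalizing C with
  | empty => simp [bernoulliSetProb]
  | @insert a s ha ih =>
    rw [forall_mem_insert] at hA hp
    calc (C + ∑ i ∈ insert a s, p i • A i).det
        = (C + p a • A a + ∑ i ∈ s, p i • A i).det := by rw [sum_insert ha, add_assoc]
      _ ≤ ∑ S ∈ s.powerset, bernoulliSetProb p s S * (C + p a • A a + ∑ i ∈ S, A i).det :=
        ih hA.2 hp.2 (hC.add (hA.1.smul hp.1.1))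
      _ ≤ ∑ S ∈ s.powerset, (bernoulliSetProb p (insert a s) S * (C + ∑ i ∈ S, A i).det +
            bernoulliSetProb p (insert a s) (insert a S) *
              (C + ∑ i ∈ insert a S, A i).det) := by
        refine sum_le_sum fun S hS => ?_
        rw [mem_powerset] at hS
        have hX : (C + ∑ i ∈ S, A i).PosSemidef :=
          hC.add (posSemidef_sum S fun i hi => hA.2 i (hS hi))
        rw [bernoulliSetProb_insert ha hS, bernoulliSetProb_insert_insert ha hS,
          sum_insert fun h => ha (hS h), add_right_comm, add_left_comm, add_comm (A a)]
        linarith [mul_le_mul_of_nonneg_left (hX.det_add_smul_le hA.1 hp.1.1 hp.1.2)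
          (bernoulliSetProb_nonneg hp.2 hS)]
      _ = _ := by rw [sum_powerset_insert ha, sum_add_distrib]

end

/-- The expectation over independent Bernoulli variables `π i ~ Bern (p i)` of
`det (∑ i, π i • U i (U i)ᵀ)` is at least `det (∑ i, p i • U i (U i)ᵀ)`. -/
theorem expected_det_rank_r_sum_ge
    (m n : ℕ) (r : Fin m → ℕ) (U : (i : Fin m) → Matrix (Fin n) (Fin (r i)) ℝ)
    (p : Fin m → ℝ) (hp : ∀ i, p i ∈ Set.Icc (0 : ℝ) 1) :
    ∑ S ∈ Finset.univ.powerset,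
        (∏ i ∈ S, p i) * (∏ i ∈ Sᶜ, (1 - p i)) *
          (∑ i ∈ S, U i * (U i)ᵀ).det
      ≥ (∑ i : Fin m, p i • (U i * (U i)ᵀ)).det := by
  have hUUt (i : Fin m) : (U i * (U i)ᵀ).PosSemidef := by
    simpa using posSemidef_self_mul_conjTranspose (U i)
  simpa [bernoulliSetProb, compl_eq_univ_sdiff] using
    det_add_sum_smul_le_sum_bernoulliSetProb univ (fun i _ => hUUt i) (fun i _ => hp i)
      PosSemidef.zero
end

section
/- Let B be an n×M real matrix with columns b_1,...,b_M, let {E_1,...,E_k} be a partition of the column index set {1,...,M} into k blocks, and let p_1,...,p_k ∈ [0,1]. For each block b let A_b be the n×|E_b| matrix formed by the columns of B indexed by E_b. Then the expectation over independent Bernoulli variables π_1,...,π_k with π_b ~ Bern(p_b) of det(Σ_{b=1}^k π_b A_b A_bᵀ) equals Σ_{Q} (Π_{b : Q ∩ E_b ≠ ∅} p_b) · det(B_Q) · det(B_Q), where the sum ranges over all subsets Q of {1,...,M} with |Q| = n and B_Q is the n×n submatrix of B with columns indexed by Q. -/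
/-!
Expanding the determinant multilinearly in the rows of `∑_{i ∈ S} bᵢ bᵢᵀ` writes it as a sum
over column selections `f : Fin n → S`; non-injective selections contribute zero, and grouping
the injective ones by their image gives Cauchy–Binet:
`det (∑_{i ∈ S} bᵢ bᵢᵀ) = ∑_{Q ⊆ S, |Q| = n} det (B_Q)²`.
For a realization `T` of the operational blocks, `S` is the union of the blocks in `T`, and a
column set `Q` lies in it exactly when `T` contains every block meeting `Q`. Exchanging the sums,
the Bernoulli weights of those `T` add up to the probability `∏ p_b` over the blocks meeting `Q`.
-/

open Matrix Finset Function

namespace Matrix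

variable {R m ι : Type*} [CommRing R] [Fintype m]

def colGram (B : Matrix m ι R) (S : Finset ι) : Matrix m m R :=
  ∑ i ∈ S, vecMulVec (fun r => B r i) (fun r => B r i)

lemma det_colGram_eq_sum_piFinset [DecidableEq ι] [DecidableEq m] (B : Matrix m ι R)
    (S : Finset ι) :
    (colGram B S).det = ∑ f ∈ Fintype.piFinset (fun _ : m => S),
      (∏ r, B r (f r)) * (B.submatrix id f).det := by
  have rows : colGram B S = fun r => ∑ i ∈ S, B r i • Bᵀ i := by
    ext r c
    simp [colGram, Matrix.sum_apply, vecMulVec_apply]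
  rw [det, rows]
  refine ((detRowAlternating (n := m) (R := R)).toMultilinearMap.map_sum_finset
    (fun r i => B r i • Bᵀ i) fun _ => S).trans (sum_congr rfl fun f _ => ?_)
  rw [MultilinearMap.map_smul_univ, ← det_transpose, smul_eq_mul]
  rfl

lemma det_submatrix_eq_zero_of_not_injective [DecidableEq m] (B : Matrix m ι R) {f : m → ι}
    (hf : ¬ Injective f) : (B.submatrix id f).det = 0 := by
  obtain ⟨a, b, hab, hne⟩ := not_injective_iff.mp hf
  exact det_zero_of_column_eq hne fun r => by simp [hab]

lemma colGram_eq_mul_transpose (B : Matrix m ι R) (S : Finset ι) (e : m ≃ S) :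
    colGram B S
      = B.submatrix id (fun j => (e j : ι)) * (B.submatrix id (fun j => (e j : ι)))ᵀ := by
  ext r c
  simp only [colGram, Matrix.sum_apply, vecMulVec_apply, mul_apply, submatrix_apply, id,
    transpose_apply]
  rw [← sum_coe_sort S, ← e.sum_comp]

lemma det_colGram_eq_det_mul_det [DecidableEq m] (B : Matrix m ι R) (S : Finset ι) (e : m ≃ S) :
    (colGram B S).det =
      (B.submatrix id (fun j => (e j : ι))).det * (B.submatrix id (fun j => (e j : ι))).det := by
  rw [colGram_eq_mul_transpose B S e, det_mul, det_transpose]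

lemma det_colGram_eq_sum_injective [DecidableEq ι] [DecidableEq m] (B : Matrix m ι R)
    (S : Finset ι) :
    (colGram B S).det = ∑ f ∈ Fintype.piFinset (fun _ : m => S) with Injective f,
      (∏ r, B r (f r)) * (B.submatrix id f).det := by
  rw [det_colGram_eq_sum_piFinset, sum_filter_of_ne]
  intro f _ hf
  by_contra hni
  exact hf (by rw [det_submatrix_eq_zero_of_not_injective B hni, mul_zero])

/-- Cauchy–Binet, with `det (colGram B Q) = det (B_Q)²` by `det_colGram_eq_det_mul_det`. -/
theorem det_colGram_eq_sum_powersetCard [DecidableEq ι] [DecidableEq m] (B : Matrix m ι R)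
    (S : Finset ι) :
    (colGram B S).det = ∑ Q ∈ S.powersetCard (Fintype.card m), (colGram B Q).det := by
  have image_mem : ∀ f ∈ {f ∈ Fintype.piFinset (fun _ : m => S) | Injective f},
      univ.image f ∈ S.powersetCard (Fintype.card m) := by
    intro f hf
    obtain ⟨hfS, hf⟩ := mem_filter.mp hf
    refine mem_powersetCard.mpr ⟨image_subset_iff.mpr fun r _ => ?_, ?_⟩
    · exact Fintype.mem_piFinset.mp hfS r
    · rw [card_image_of_injective _ hf, card_univ]
  have fiber_eq : ∀ Q ∈ S.powersetCard (Fintype.card m),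
      {f ∈ {f ∈ Fintype.piFinset (fun _ : m => S) | Injective f} | univ.image f = Q}
        = {f ∈ Fintype.piFinset (fun _ : m => Q) | Injective f} := by
    intro Q hQ
    obtain ⟨hQS, hQcard⟩ := mem_powersetCard.mp hQ
    ext f
    simp only [mem_filter, Fintype.mem_piFinset]
    constructor
    · rintro ⟨⟨-, hf⟩, rfl⟩
      exact ⟨fun r => mem_image_of_mem f (mem_univ r), hf⟩
    · rintro ⟨hfQ, hf⟩
      refine ⟨⟨fun r => hQS (hfQ r), hf⟩, eq_of_subset_of_card_le ?_ ?_⟩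
      · exact image_subset_iff.mpr fun r _ => hfQ r
      · rw [card_image_of_injective _ hf, hQcard, card_univ]
  rw [det_colGram_eq_sum_injective, ← sum_fiberwise_of_maps_to image_mem]
  refine sum_congr rfl fun Q hQ => ?_
  rw [fiber_eq Q hQ, det_colGram_eq_sum_injective]

end Matrix

lemma Finset.sum_filter_superset_prod_mul_prod_compl {ι R : Type*} [Fintype ι] [DecidableEq ι]
    [CommRing R] (p : ι → R) (S : Finset ι) :
    ∑ T ∈ univ.powerset with S ⊆ T, (∏ b ∈ T, p b) * ∏ b ∈ Tᶜ, (1 - p b) =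
      ∏ b ∈ S, p b := by
  -- expand `∏ b, (p b + q b)` with `q = 0` on `S`: only the terms with `S ⊆ T` survive
  have weight : ∀ T : Finset ι,
      ∏ b ∈ univ \ T, (if b ∈ S then 0 else 1 - p b)
        = if S ⊆ T then ∏ b ∈ Tᶜ, (1 - p b) else 0 := by
    intro T
    split_ifs with hST
    · rw [← compl_eq_univ_sdiff]
      exact prod_congr rfl fun b hb => if_neg fun hbS => mem_compl.mp hb (hST hbS)
    · obtain ⟨b, hbS, hbT⟩ := not_subset.mp hST
      exact prod_eq_zero (by simpa using hbT) (if_pos hbS)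
  have total : ∏ b, (p b + if b ∈ S then 0 else 1 - p b) = ∏ b ∈ S, p b := by
    rw [← prod_ite_mem_eq S p]
    refine prod_congr rfl fun b _ => ?_
    split_ifs <;> ring
  rw [sum_filter, ← total, prod_add]
  refine sum_congr rfl fun T _ => ?_
  rw [weight]
  split_ifs <;> simp

lemma Finset.subset_biUnion_iff_filter_subset {κ ι : Type*} [Fintype κ] [DecidableEq κ]
    [DecidableEq ι] {E : κ → Finset ι} (hdisj : Pairwise (Disjoint on E)) (hcover : ∀ i, ∃ b, i ∈ E b)
    (Q : Finset ι) (T : Finset κ) :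
    Q ⊆ T.biUnion E ↔ univ.filter (fun b => (Q ∩ E b).Nonempty) ⊆ T := by
  constructor
  · intro hQ b hb
    obtain ⟨i, hi⟩ := (mem_filter.mp hb).2
    obtain ⟨hiQ, hib⟩ := mem_inter.mp hi
    obtain ⟨b', hb'T, hib'⟩ := mem_biUnion.mp (hQ hiQ)
    obtain rfl : b = b' := by
      by_contra hne
      exact disjoint_left.mp (hdisj hne) hib hib'
    exact hb'T
  · intro hT i hiQ
    obtain ⟨b, hib⟩ := hcover i
    have hbT : b ∈ T := hT (mem_filter.mpr ⟨mem_univ b, i, mem_inter.mpr ⟨hiQ, hib⟩⟩)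
    exact mem_biUnion.mpr ⟨b, hbT, hib⟩

theorem expected_det_block_rank_sum_general
    (n M k : ℕ) (B : Matrix (Fin n) (Fin M) ℝ)
    (E : Fin k → Finset (Fin M))
    (hE_disjoint : ∀ b b', b ≠ b' → Disjoint (E b) (E b'))
    (hE_cover : Finset.univ.biUnion E = Finset.univ)
    (p : Fin k → ℝ) :
    ∑ T ∈ Finset.univ.powerset,
        (∏ b ∈ T, p b) * (∏ b ∈ Tᶜ, (1 - p b)) *
          (∑ b ∈ T, ∑ i ∈ E b,
            Matrix.vecMulVec (fun r => B r i) (fun r => B r i)).det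
      = ∑ Q ∈ (Finset.univ.powersetCard n (α := Fin M)).attach,
          (∏ b ∈ Finset.univ.filter (fun b => (Q.1 ∩ E b).Nonempty), p b) *
            (B.submatrix id (fun j : Fin n =>
              (Q.1.orderIsoOfFin (Finset.mem_powersetCard_univ.mp Q.2) j : Fin M))).det *
            (B.submatrix id (fun j : Fin n =>
              (Q.1.orderIsoOfFin (Finset.mem_powersetCard_univ.mp Q.2) j : Fin M))).det := by
  have hcover : ∀ i, ∃ b, i ∈ E b := fun i => by simpa using hE_cover.ge (mem_univ i)
  have subset_blocks_iff := subset_biUnion_iff_filter_subset (fun b b' => hE_disjoint b b') hcover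
  calc _ = ∑ T ∈ univ.powerset, ∑ Q ∈ univ.powersetCard n,
          if univ.filter (fun b => (Q ∩ E b).Nonempty) ⊆ T then
            (∏ b ∈ T, p b) * (∏ b ∈ Tᶜ, (1 - p b)) * (colGram B Q).det
          else 0 := by
        refine sum_congr rfl fun T _ => ?_
        rw [← sum_biUnion fun b _ b' _ => hE_disjoint b b', ← colGram,
          det_colGram_eq_sum_powersetCard, Fintype.card_fin, mul_sum, ← sum_filter]
        refine sum_congr ?_ fun _ _ => rfl
        ext Q
        simp [subset_blocks_iff, and_comm]
    _ = ∑ Q ∈ univ.powersetCard n, (colGram B Q).det *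
          ∑ T ∈ univ.powerset with univ.filter (fun b => (Q ∩ E b).Nonempty) ⊆ T,
            (∏ b ∈ T, p b) * ∏ b ∈ Tᶜ, (1 - p b) := by
        rw [sum_comm]
        refine sum_congr rfl fun Q _ => ?_
        rw [mul_sum, sum_filter]
        refine sum_congr rfl fun T _ => ?_
        split_ifs <;> ring
    _ = _ := by
        rw [← sum_attach]
        refine sum_congr rfl fun Q _ => ?_
        rw [sum_filter_superset_prod_mul_prod_compl, det_colGram_eq_det_mul_det B Q.1
          (Q.1.orderIsoOfFin (mem_powersetCard_univ.mp Q.2)).toEquiv, mul_comm, mul_assoc]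
        rfl

/-- Block version: the columns of `B` are partitioned into `k` blocks `E b`,
and block `b` is operational independently with probability `p b`. The
expectation of `det (∑ b, π b • A b (A b)ᵀ)` (where `A b (A b)ᵀ` is the sum of
the outer products of the columns of `B` in block `E b`) equals
`∑_{Q, |Q| = n} (∏_{b : Q ∩ E b ≠ ∅} p b) * det (B_Q) * det (B_Q)`. -/
theorem expected_det_block_rank_sum
    (n M k : ℕ) (B : Matrix (Fin n) (Fin M) ℝ)
    (E : Fin k → Finset (Fin M))
    (hE_nonempty : ∀ b, (E b).Nonempty)
    (hE_disjoint : ∀ b b', b ≠ b' → Disjoint (E b) (E b'))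
    (hE_cover : Finset.univ.biUnion E = Finset.univ)
    (p : Fin k → ℝ) (hp : ∀ b, p b ∈ Set.Icc (0 : ℝ) 1) :
    ∑ T ∈ Finset.univ.powerset,
        (∏ b ∈ T, p b) * (∏ b ∈ Tᶜ, (1 - p b)) *
          (∑ b ∈ T, ∑ i ∈ E b,
            Matrix.vecMulVec (fun r => B r i) (fun r => B r i)).det
      = ∑ Q ∈ (Finset.univ.powersetCard n (α := Fin M)).attach,
          (∏ b ∈ Finset.univ.filter (fun b => (Q.1 ∩ E b).Nonempty), p b) *
            (B.submatrix id (fun j : Fin n =>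
              (Q.1.orderIsoOfFin (Finset.mem_powersetCard_univ.mp Q.2) j : Fin M))).det *
            (B.submatrix id (fun j : Fin n =>
              (Q.1.orderIsoOfFin (Finset.mem_powersetCard_univ.mp Q.2) j : Fin M))).det :=
  expected_det_block_rank_sum_general n M k B E hE_disjoint hE_cover p
end

section
/- Let a_1,...,a_m ∈ ℝ^n, let w_1,...,w_m be positive reals (edge weights), and let p_1,...,p_m ∈ [0,1]. Then the expectation over independent Bernoulli variables π_1,...,π_m with π_i ~ Bern(p_i) of det(Σ_{i=1}^m π_i w_i a_i a_iᵀ) equals det(Σ_{i=1}^m p_i w_i a_i a_iᵀ). In particular, the expected weighted number of spanning trees of a random edge-weighted graph whose i-th edge is operational independently with probability p_i (with a_i the corresponding column of the reduced incidence matrix) equals the weighted number of spanning trees of the deterministic graph with edge weights p_i w_i. -/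
/-!
The function `π ↦ det (∑ i, π i • w i • a i (a i)ᵀ)` is affine in each `π i` separately, because a
rank-one perturbation changes a determinant affinely in its scale. The expectation of such a function
under independent Bernoulli variables is its value at the means, as one sees by conditioning on one
variable at a time.
-/

open Matrix Finset

section RankOneUpdate

variable {R n : Type*} [CommRing R] [Fintype n] [DecidableEq n]

/-- Bordering `B` by the row `(1, c vᵀ)` and the column `(1, -u)` turns `B + c • u vᵀ` into a Schur
complement, and the bordered determinant is linear in its first row, hence affine in `c`. -/
theorem Matrix.exists_det_add_smul_vecMulVec (B : Matrix n n R) (u v : n → R) :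
    ∃ k : R, ∀ c : R, (B + c • vecMulVec u v).det = B.det + c * k := by
  let X : R → Matrix (Unit ⊕ n) (Unit ⊕ n) R := fun c =>
    fromBlocks 1 (c • replicateRow Unit v) (-replicateCol Unit u) B
  have hX : ∀ c, (X c).det = (B + c • vecMulVec u v).det := fun c => by
    rw [det_fromBlocks_one₁₁, vecMulVec_eq Unit, Matrix.neg_mul, Matrix.mul_smul, sub_neg_eq_add]
  have hrow : ∀ c,
      X c = (X 0).updateRow (.inl ()) (X 0 (.inl ()) + c • Sum.elim (0 : Unit → R) v) := by
    intro c
    ext (i | i) (j | j) <;> simp [X, updateRow_apply]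
  refine ⟨(X 0).updateRow (.inl ()) (Sum.elim (0 : Unit → R) v) |>.det, fun c => ?_⟩
  rw [← hX, hrow, det_updateRow_add, det_updateRow_smul, updateRow_eq_self, hX, zero_smul, add_zero]

theorem Matrix.det_add_smul_vecMulVec_s7 (B : Matrix n n R) (u v : n → R) (c : R) :
    (B + c • vecMulVec u v).det = (1 - c) * B.det + c * (B + vecMulVec u v).det := by
  obtain ⟨k, hk⟩ := exists_det_add_smul_vecMulVec B u v
  have h1 := hk 1
  rw [one_smul] at h1
  rw [hk, h1]
  ring

end RankOneUpdate

theorem Finset.sum_powerset_bernoulli_of_affine {ι R M : Type*} [DecidableEq ι] [CommRing R]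
    [AddCommGroup M] [Module R M] (F : M → R) (d : ι → M) (p : ι → R)
    (hF : ∀ X i c, F (X + c • d i) = (1 - c) * F X + c * F (X + d i)) (s : Finset ι) (X : M) :
    ∑ S ∈ s.powerset, (∏ i ∈ S, p i) * (∏ i ∈ s \ S, (1 - p i)) * F (X + ∑ i ∈ S, d i)
      = F (X + ∑ i ∈ s, p i • d i) := by
  induction s using Finset.induction_on generalizing X with
  | empty => simp
  | @insert j s hj ih =>
    have hjS : ∀ S ∈ s.powerset, j ∉ S := fun S hS h => hj (mem_powerset.mp hS h)
    have without_j : ∑ S ∈ s.powerset,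
        (∏ i ∈ S, p i) * (∏ i ∈ insert j s \ S, (1 - p i)) * F (X + ∑ i ∈ S, d i)
          = (1 - p j) * F (X + ∑ i ∈ s, p i • d i) := by
      rw [← ih, mul_sum]
      refine sum_congr rfl fun S hS => ?_
      rw [insert_sdiff_of_notMem s (hjS S hS), prod_insert (by simp [hj])]
      ring
    have with_j : ∑ S ∈ s.powerset, (∏ i ∈ insert j S, p i)
        * (∏ i ∈ insert j s \ insert j S, (1 - p i)) * F (X + ∑ i ∈ insert j S, d i)
          = p j * F (X + ∑ i ∈ s, p i • d i + d j) := by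
      rw [add_right_comm, ← ih, mul_sum]
      refine sum_congr rfl fun S hS => ?_
      rw [insert_sdiff_insert, sdiff_insert_of_notMem hj, prod_insert (hjS S hS),
        sum_insert (hjS S hS), ← add_assoc]
      ring
    rw [sum_powerset_insert hj, without_j, with_j, sum_insert hj, add_left_comm,
      add_comm (p j • d j), hF]

theorem expected_weighted_tree_connectivity_general
    (m n : ℕ) (a : Fin m → Fin n → ℝ) (w : Fin m → ℝ)
    (p : Fin m → ℝ) :
    ∑ S ∈ Finset.univ.powerset,
        (∏ i ∈ S, p i) * (∏ i ∈ Sᶜ, (1 - p i)) *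
          (∑ i ∈ S, w i • Matrix.vecMulVec (a i) (a i)).det
      = (∑ i : Fin m, (p i * w i) • Matrix.vecMulVec (a i) (a i)).det := by
  have hdet : ∀ (X : Matrix (Fin n) (Fin n) ℝ) i (c : ℝ),
      (X + c • w i • vecMulVec (a i) (a i)).det
        = (1 - c) * X.det + c * (X + w i • vecMulVec (a i) (a i)).det := by
    intro X i c
    rw [← smul_vecMulVec]
    exact det_add_smul_vecMulVec_s7 X _ _ c
  simpa [compl_eq_univ_sdiff, mul_smul] using
    sum_powerset_bernoulli_of_affine det (fun i => w i • vecMulVec (a i) (a i)) p hdet univ 0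

/-- The expectation over independent Bernoulli variables `π i ~ Bern (p i)` of
`det (∑ i, π i • w i • a i (a i)ᵀ)` equals `det (∑ i, p i • w i • a i (a i)ᵀ)`.
By the matrix-tree theorem, when `a i` are the columns of the reduced incidence
matrix of a graph, this says that the expected weighted number of spanning
trees of the random graph equals the weighted number of spanning trees of the
deterministic graph with edge weights `p i * w i`. -/
theorem expected_weighted_tree_connectivity
    (m n : ℕ) (a : Fin m → Fin n → ℝ) (w : Fin m → ℝ) (hw : ∀ i, 0 < w i)
    (p : Fin m → ℝ) (hp : ∀ i, p i ∈ Set.Icc (0 : ℝ) 1) :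
    ∑ S ∈ Finset.univ.powerset,
        (∏ i ∈ S, p i) * (∏ i ∈ Sᶜ, (1 - p i)) *
          (∑ i ∈ S, w i • Matrix.vecMulVec (a i) (a i)).det
      = (∑ i : Fin m, (p i * w i) • Matrix.vecMulVec (a i) (a i)).det :=
  expected_weighted_tree_connectivity_general m n a w p
end
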